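/- arXiv:math/0701542 — 2 statements merged into one kernel-verified Lean document; each statement's English description precedes it below -/
import Mathlib

section
/- For a histogram model S_m on the partition (I_λ)_{λ∈Λ_m}, on the event min_{λ∈Λ_m} p̂_λ > 0 the ideal penalty penid(m) := (P − P_n)γ(ŝ_m) satisfies the exact decomposition penid(m) = Σ_{λ∈Λ_m} (p_λ + p̂_λ)(β̂_λ − β_λ)² + (P − P_n)γ(s_m). -/
open MeasureTheory ProbabilityTheory Finset

namespace RP

/-- A histogram model: a finite measurable partition of the feature space `𝒳`. -/
structure HistModel (𝒳 : Type) [MeasurableSpace 𝒳] where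
  ι : Type
  fin : Fintype ι
  cell : ι → Set 𝒳
  meas : ∀ l, MeasurableSet (cell l)
  disj : Pairwise (Function.onFun Disjoint cell)
  cover : (⋃ l, cell l) = Set.univ

attribute [instance] HistModel.fin

variable {𝒳 Ω Ω' : Type} [MeasurableSpace 𝒳]

/-- dimension `D_m` of a histogram model. -/
noncomputable def dim (m : HistModel 𝒳) : ℕ := Fintype.card m.ι

/-- `n p̂_λ` : number of the first `n` data points falling in the cell `S`. -/
noncomputable def cnt (X : ℕ → Ω → 𝒳) (n : ℕ) (S : Set 𝒳) (ω : Ω) : ℝ :=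
  ∑ i ∈ Finset.range n, S.indicator (fun _ => (1 : ℝ)) (X i ω)

open Classical in
/-- `n p̂_λ` as a natural number. -/
noncomputable def cntN (X : ℕ → Ω → 𝒳) (n : ℕ) (S : Set 𝒳) (ω : Ω) : ℕ :=
  ((Finset.range n).filter (fun i => X i ω ∈ S)).card

/-- `p̂_λ = P_n(X ∈ S)`. -/
noncomputable def phat (X : ℕ → Ω → 𝒳) (n : ℕ) (S : Set 𝒳) (ω : Ω) : ℝ :=
  cnt X n S ω / n

/-- `β̂_λ` : empirical mean of `Y` over the cell `S`. -/
noncomputable def betahat (X : ℕ → Ω → 𝒳) (Y : ℕ → Ω → ℝ) (n : ℕ) (S : Set 𝒳) (ω : Ω) : ℝ :=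
  (∑ i ∈ Finset.range n, S.indicator (fun _ => Y i ω) (X i ω)) / cnt X n S ω

/-- `ŝ_m` : the empirical risk minimizer (histogram estimator) on the model `m`. -/
noncomputable def shat (m : HistModel 𝒳) (X : ℕ → Ω → 𝒳) (Y : ℕ → Ω → ℝ) (n : ℕ)
    (ω : Ω) (x : 𝒳) : ℝ :=
  ∑ l, (m.cell l).indicator (fun _ => betahat X Y n (m.cell l) ω) x

/-- `p_λ = P(X ∈ S)` where `P` is the law of `(X,Y)`. -/
noncomputable def pP (P : Measure (𝒳 × ℝ)) (S : Set 𝒳) : ℝ :=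
  (P (S ×ˢ (Set.univ : Set ℝ))).toReal

/-- `β_λ = E[Y | X ∈ S]`. -/
noncomputable def betaP (P : Measure (𝒳 × ℝ)) (S : Set 𝒳) : ℝ :=
  (∫ z in S ×ˢ (Set.univ : Set ℝ), z.2 ∂P) / pP P S

/-- `s_m` : the projection of the regression function on the model `m`. -/
noncomputable def sm (m : HistModel 𝒳) (P : Measure (𝒳 × ℝ)) (x : 𝒳) : ℝ :=
  ∑ l, (m.cell l).indicator (fun _ => betaP P (m.cell l)) x

/-- `P γ(t)` : true risk of a predictor `t` for the least-squares contrast. -/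
noncomputable def risk (P : Measure (𝒳 × ℝ)) (t : 𝒳 → ℝ) : ℝ :=
  ∫ z, (t z.1 - z.2) ^ 2 ∂P

/-- `ℓ(s,t) = Pγ(t) − Pγ(s)` : excess loss. -/
noncomputable def excess (P : Measure (𝒳 × ℝ)) (s t : 𝒳 → ℝ) : ℝ := risk P t - risk P s

/-- `P_n γ(t)` : empirical risk of a predictor `t`. -/
noncomputable def empRisk (X : ℕ → Ω → 𝒳) (Y : ℕ → Ω → ℝ) (n : ℕ) (t : 𝒳 → ℝ) (ω : Ω) : ℝ :=
  (∑ i ∈ Finset.range n, (t (X i ω) - Y i ω) ^ 2) / n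

/-- `σ_λ² = E[σ(X)² | X ∈ S]`. -/
noncomputable def sigmaSq (P : Measure (𝒳 × ℝ)) (σf : 𝒳 → ℝ) (S : Set 𝒳) : ℝ :=
  (∫ z in S ×ˢ (Set.univ : Set ℝ), (σf z.1) ^ 2 ∂P) / pP P S

/-- `d_λ² = E[(s(X) − s_m(X))² | X ∈ S]`. -/
noncomputable def dSq (P : Measure (𝒳 × ℝ)) (s t : 𝒳 → ℝ) (S : Set 𝒳) : ℝ :=
  (∫ z in S ×ˢ (Set.univ : Set ℝ), (s z.1 - t z.1) ^ 2 ∂P) / pP P S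

/-- `n p̂_λ W̄_λ = Σ_{X_i ∈ S} W_i`. -/
noncomputable def wsum (W : ℕ → Ω' → ℝ) (X : ℕ → Ω → 𝒳) (n : ℕ) (S : Set 𝒳)
    (ω : Ω) (w : Ω') : ℝ :=
  ∑ i ∈ Finset.range n, S.indicator (fun _ => W i w) (X i ω)

/-- `W̄_λ` : mean of the resampling weights over the cell `S`. -/
noncomputable def wbar (W : ℕ → Ω' → ℝ) (X : ℕ → Ω → 𝒳) (n : ℕ) (S : Set 𝒳)
    (ω : Ω) (w : Ω') : ℝ :=
  wsum W X n S ω w / cnt X n S ω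

/-- `β̂_λ^W` : resampled empirical mean of `Y` over the cell `S`. -/
noncomputable def betahatW (W : ℕ → Ω' → ℝ) (X : ℕ → Ω → 𝒳) (Y : ℕ → Ω → ℝ) (n : ℕ)
    (S : Set 𝒳) (ω : Ω) (w : Ω') : ℝ :=
  (∑ i ∈ Finset.range n, S.indicator (fun _ => W i w * Y i ω) (X i ω)) / wsum W X n S ω w

/-- the resampling penalty
`pen(m) = C Σ_λ E_W[(p̂_λ + p̂_λ W̄_λ)(β̂_λ^W − β̂_λ)² | W̄_λ > 0]`. -/
noncomputable def pen [MeasurableSpace Ω'] (ν : Measure Ω') (W : ℕ → Ω' → ℝ) (C : ℝ)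
    (m : HistModel 𝒳) (X : ℕ → Ω → 𝒳) (Y : ℕ → Ω → ℝ) (n : ℕ) (ω : Ω) : ℝ :=
  C * ∑ l, ∫ w,
      (phat X n (m.cell l) ω + phat X n (m.cell l) ω * wbar W X n (m.cell l) ω w) *
        (betahatW W X Y n (m.cell l) ω w - betahat X Y n (m.cell l) ω) ^ 2
      ∂(ν[|{w' | 0 < wbar W X n (m.cell l) ω w'}])

/-- mean of the first `c` resampling weights. -/
noncomputable def avgW (W : ℕ → Ω' → ℝ) (c : ℕ) (w : Ω') : ℝ :=
  (∑ i ∈ Finset.range c, W i w) / c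

/-- `R_{k,W}(n, p̂)` for `n p̂ = c`, computed on the canonical cell `{0, …, c−1}`
(for exchangeable weights it only depends on the cardinality `c` of the cell). -/
noncomputable def RkW [MeasurableSpace Ω'] (ν : Measure Ω') (W : ℕ → Ω' → ℝ) (k c : ℕ) : ℝ :=
  ∫ w, (W 0 w - avgW W c w) ^ 2 / (avgW W c w) ^ (3 - k) ∂(ν[|{w' | 0 < avgW W c w'}])

/-- `C_W(Â) = sup_{n p̂ ≥ Â} 2 / (R_{1,W}(n,p̂) + R_{2,W}(n,p̂))`. -/
noncomputable def CWsup [MeasurableSpace Ω'] (ν : Measure Ω') (W : ℕ → Ω' → ℝ)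
    (n : ℕ) (B : ℝ) : ℝ :=
  sSup {x : ℝ | ∃ c : ℕ, c ≤ n ∧ B ≤ (c : ℝ) ∧ x = 2 / (RkW ν W 1 c + RkW ν W 2 c)}

/-- `C_W′(Â) = inf_{n p̂ ≥ Â} 2 / (R_{1,W}(n,p̂) + R_{2,W}(n,p̂))`. -/
noncomputable def CWinf [MeasurableSpace Ω'] (ν : Measure Ω') (W : ℕ → Ω' → ℝ)
    (n : ℕ) (B : ℝ) : ℝ :=
  sInf {x : ℝ | ∃ c : ℕ, c ≤ n ∧ B ≤ (c : ℝ) ∧ x = 2 / (RkW ν W 1 c + RkW ν W 2 c)}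

instance {α : Type} : MeasurableSpace (Finset α) := ⊤

/-- uniform probability measure on a finite type. -/
noncomputable def unifM (α : Type) [Fintype α] [MeasurableSpace α] : Measure α :=
  (Fintype.card α : ENNReal)⁻¹ • Measure.count

/-- Efron(q) weights: `(n/q)` times a multinomial vector with parameters `(q; 1/n, …, 1/n)`. -/
def IsEfron [MeasurableSpace Ω'] (ν : Measure Ω') (W : ℕ → Ω' → ℝ) (n q : ℕ) : Prop :=
  Measure.map (fun w (i : Fin n) => W i w) ν =
    Measure.map (fun (u : Fin q → Fin n) (i : Fin n) =>
      (n : ℝ) / q * ((Finset.univ.filter fun k => u k = i).card : ℝ)) (unifM (Fin q → Fin n))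

/-- Rademacher weights: i.i.d., uniform on `{0, 2}`. -/
def IsRademacher [MeasurableSpace Ω'] (ν : Measure Ω') (W : ℕ → Ω' → ℝ) (n : ℕ) : Prop :=
  Measure.map (fun w (i : Fin n) => W i w) ν =
    Measure.map (fun (u : Fin n → Bool) (i : Fin n) => if u i then (2 : ℝ) else 0)
      (unifM (Fin n → Bool))

/-- Random hold-out(q) weights: `W_i = (n/q) 1_{i ∈ I}`, `I` uniform among `q`-subsets. -/
def IsRHO [MeasurableSpace Ω'] (ν : Measure Ω') (W : ℕ → Ω' → ℝ) (n q : ℕ) : Prop :=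
  Measure.map (fun w (i : Fin n) => W i w) ν =
    Measure.map (fun (I : {t : Finset (Fin n) // t.card = q}) (i : Fin n) =>
      if i ∈ I.1 then (n : ℝ) / q else 0) (unifM {t : Finset (Fin n) // t.card = q})

/-- Leave-one-out weights = Random hold-out(n−1) weights. -/
def IsLOO [MeasurableSpace Ω'] (ν : Measure Ω') (W : ℕ → Ω' → ℝ) (n : ℕ) : Prop :=
  IsRHO ν W n (n - 1)

/-- Exchangeability of the first `n` weights. -/
def Exchangeable [MeasurableSpace Ω'] (ν : Measure Ω') (W : ℕ → Ω' → ℝ) (n : ℕ) : Prop :=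
  ∀ e : Equiv.Perm (Fin n),
    Measure.map (fun w (i : Fin n) => W (e i) w) ν =
      Measure.map (fun w (i : Fin n) => W (i : ℕ) w) ν



/-!
Both `P` and the empirical measure `P_n` are finite measures on `𝒳 × ℝ`, and `ŝ_m`, `s_m` are
the histograms of the cell means of `Y` under `P_n` and `P` respectively. For any finite measure
`μ` giving positive mass to every cell, the Pythagoras identity on each cell gives
`μγ(Σ a_λ 1_{I_λ}) − μγ(s_m(μ)) = Σ_λ μ(I_λ) (a_λ − β_λ(μ))²`. Applying it to `μ = P` with
`a = β̂` and to `μ = P_n` with `a = β`, and adding, yields the decomposition.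
-/

open scoped NNReal

section Histogram

variable (m : HistModel 𝒳)

theorem HistModel.exists_mem_cell (x : 𝒳) : ∃ l, x ∈ m.cell l := by
  have hx : x ∈ ⋃ l, m.cell l := m.cover ▸ Set.mem_univ x
  simpa using hx

noncomputable def histogram (c : m.ι → ℝ) (x : 𝒳) : ℝ :=
  ∑ l, (m.cell l).indicator (fun _ => c l) x

variable {m}

theorem histogram_apply_of_mem {c : m.ι → ℝ} {x : 𝒳} {l : m.ι} (hx : x ∈ m.cell l) :
    histogram m c x = c l := by
  refine (Finset.sum_eq_single l (fun k _ hk => ?_) (by simp)).trans (by simp [hx])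
  exact Set.indicator_of_notMem (Set.disjoint_right.1 (m.disj hk) hx) _

theorem comp_histogram (f : ℝ → ℝ) (c : m.ι → ℝ) (x : 𝒳) :
    f (histogram m c x) = histogram m (f ∘ c) x := by
  obtain ⟨l, hl⟩ := m.exists_mem_cell x
  rw [histogram_apply_of_mem hl, histogram_apply_of_mem hl, Function.comp_apply]

theorem measurable_histogram (c : m.ι → ℝ) : Measurable (histogram m c) :=
  Finset.measurable_sum _ fun l _ => measurable_const.indicator (m.meas l)

end Histogram

section Risk

variable {m : HistModel 𝒳} (μ : Measure (𝒳 × ℝ)) [IsFiniteMeasure μ]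

theorem integrable_snd_of_integrable_sq (hY2 : Integrable (fun z : 𝒳 × ℝ => z.2 ^ 2) μ) :
    Integrable (fun z : 𝒳 × ℝ => z.2) μ :=
  ((memLp_two_iff_integrable_sq measurable_snd.aestronglyMeasurable).2 hY2).integrable
    one_le_two

theorem integrable_const_sub_snd_sq (hY2 : Integrable (fun z : 𝒳 × ℝ => z.2 ^ 2) μ) (a : ℝ) :
    Integrable (fun z : 𝒳 × ℝ => (a - z.2) ^ 2) μ := by
  have h : (fun z : 𝒳 × ℝ => (a - z.2) ^ 2) = fun z => a ^ 2 - 2 * a * z.2 + z.2 ^ 2 := by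
    funext z; ring
  rw [h]
  exact ((integrable_const _).sub ((integrable_snd_of_integrable_sq μ hY2).const_mul _)).add hY2

theorem risk_histogram (hY2 : Integrable (fun z : 𝒳 × ℝ => z.2 ^ 2) μ) (c : m.ι → ℝ) :
    risk μ (histogram m c) = ∑ l, ∫ z in m.cell l ×ˢ Set.univ, (c l - z.2) ^ 2 ∂μ := by
  have hcell : ∀ z : 𝒳 × ℝ, (histogram m c z.1 - z.2) ^ 2 =
      ∑ l, (m.cell l ×ˢ Set.univ).indicator (fun z : 𝒳 × ℝ => (c l - z.2) ^ 2) z := by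
    intro z
    rw [comp_histogram (fun t => (t - z.2) ^ 2)]
    refine Finset.sum_congr rfl fun l _ => ?_
    by_cases h : z.1 ∈ m.cell l <;> simp [h]
  have hmeas : ∀ l, MeasurableSet (m.cell l ×ˢ (Set.univ : Set ℝ)) :=
    fun l => (m.meas l).prod MeasurableSet.univ
  simp_rw [risk, hcell]
  rw [integral_finsetSum _ fun l _ =>
    (integrable_const_sub_snd_sq μ hY2 (c l)).indicator (hmeas l)]
  exact Finset.sum_congr rfl fun l _ => integral_indicator (hmeas l)

variable {μ} in
theorem setIntegral_sub_sq_sub_setIntegral_betaP_sub_sq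
    (hY2 : Integrable (fun z : 𝒳 × ℝ => z.2 ^ 2) μ) {S : Set 𝒳} (hpS : pP μ S ≠ 0) (a : ℝ) :
    (∫ z in S ×ˢ Set.univ, (a - z.2) ^ 2 ∂μ) - ∫ z in S ×ˢ Set.univ, (betaP μ S - z.2) ^ 2 ∂μ =
      pP μ S * (a - betaP μ S) ^ 2 := by
  set b := betaP μ S
  have hmean : ∫ z in S ×ˢ Set.univ, z.2 ∂μ = b * pP μ S := by
    simp only [b, betaP]; field_simp
  have hexp : ∀ z : 𝒳 × ℝ, (a - z.2) ^ 2 - (b - z.2) ^ 2 = (a ^ 2 - b ^ 2) - 2 * (a - b) * z.2 :=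
    fun z => by ring
  rw [← integral_sub (integrable_const_sub_snd_sq μ hY2 a).integrableOn
    (integrable_const_sub_snd_sq μ hY2 b).integrableOn]
  simp_rw [hexp]
  rw [integral_sub (integrable_const _)
      ((integrable_snd_of_integrable_sq μ hY2).integrableOn.const_mul _),
    integral_const_mul, setIntegral_const, hmean, smul_eq_mul, pP, measureReal_def]
  ring

theorem risk_histogram_sub_risk_sm (hY2 : Integrable (fun z : 𝒳 × ℝ => z.2 ^ 2) μ)
    (hpos : ∀ l, pP μ (m.cell l) ≠ 0) (a : m.ι → ℝ) :
    risk μ (histogram m a) - risk μ (sm m μ) =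
      ∑ l, pP μ (m.cell l) * (a l - betaP μ (m.cell l)) ^ 2 := by
  have hsm : sm m μ = histogram m fun l => betaP μ (m.cell l) := rfl
  rw [hsm, risk_histogram μ hY2, risk_histogram μ hY2, ← Finset.sum_sub_distrib]
  exact Finset.sum_congr rfl fun l _ =>
    setIntegral_sub_sq_sub_setIntegral_betaP_sub_sq hY2 (hpos l) (a l)

/-- The ideal penalty decomposition, for an arbitrary pair of finite measures. -/
theorem risk_sm_sub_risk_sm (P Q : Measure (𝒳 × ℝ)) [IsFiniteMeasure P] [IsFiniteMeasure Q]
    (hYP : Integrable (fun z : 𝒳 × ℝ => z.2 ^ 2) P)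
    (hYQ : Integrable (fun z : 𝒳 × ℝ => z.2 ^ 2) Q)
    (hpP : ∀ l, pP P (m.cell l) ≠ 0) (hpQ : ∀ l, pP Q (m.cell l) ≠ 0) :
    risk P (sm m Q) - risk Q (sm m Q) =
      (∑ l, (pP P (m.cell l) + pP Q (m.cell l)) * (betaP Q (m.cell l) - betaP P (m.cell l)) ^ 2) +
        (risk P (sm m P) - risk Q (sm m P)) := by
  have hPside := risk_histogram_sub_risk_sm P hYP hpP fun l => betaP Q (m.cell l)
  have hQside := risk_histogram_sub_risk_sm Q hYQ hpQ fun l => betaP P (m.cell l)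
  have hsum : ∑ l, (pP P (m.cell l) + pP Q (m.cell l)) *
        (betaP Q (m.cell l) - betaP P (m.cell l)) ^ 2 =
      (∑ l, pP P (m.cell l) * (betaP Q (m.cell l) - betaP P (m.cell l)) ^ 2) +
        ∑ l, pP Q (m.cell l) * (betaP P (m.cell l) - betaP Q (m.cell l)) ^ 2 := by
    rw [← Finset.sum_add_distrib]
    exact Finset.sum_congr rfl fun l _ => by ring
  have hsmQ : histogram m (fun l => betaP Q (m.cell l)) = sm m Q := rfl
  have hsmP : histogram m (fun l => betaP P (m.cell l)) = sm m P := rfl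
  rw [hsmQ] at hPside
  rw [hsmP] at hQside
  linarith

end Risk

section Empirical

/-- `P_n`, normalized by an `ℝ≥0` scalar so that it is a finite measure (zero) also for `n = 0`. -/
noncomputable def empiricalMeasure (X : ℕ → Ω → 𝒳) (Y : ℕ → Ω → ℝ) (n : ℕ) (ω : Ω) :
    Measure (𝒳 × ℝ) :=
  (n : ℝ≥0)⁻¹ • ∑ i ∈ Finset.range n, Measure.dirac (X i ω, Y i ω)

variable (X : ℕ → Ω → 𝒳) (Y : ℕ → Ω → ℝ) (n : ℕ) (ω : Ω)

instance : IsFiniteMeasure (empiricalMeasure X Y n ω) := by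
  unfold empiricalMeasure; infer_instance

variable {X Y n ω}

theorem integrable_empiricalMeasure {f : 𝒳 × ℝ → ℝ} (hf : StronglyMeasurable f) :
    Integrable f (empiricalMeasure X Y n ω) :=
  (integrable_finsetSum_measure.2 fun _ _ => integrable_dirac' hf enorm_lt_top).smul_measure_nnreal

theorem integral_empiricalMeasure {f : 𝒳 × ℝ → ℝ} (hf : StronglyMeasurable f) :
    ∫ z, f z ∂(empiricalMeasure X Y n ω) = (∑ i ∈ Finset.range n, f (X i ω, Y i ω)) / n := by
  rw [empiricalMeasure, integral_smul_nnreal_measure,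
    integral_finsetSum_measure fun _ _ => integrable_dirac' hf enorm_lt_top]
  simp [integral_dirac' _ _ hf, div_eq_inv_mul, NNReal.smul_def]

theorem empRisk_eq_risk_empiricalMeasure {t : 𝒳 → ℝ} (ht : Measurable t) :
    empRisk X Y n t ω = risk (empiricalMeasure X Y n ω) t :=
  (integral_empiricalMeasure
    (((ht.comp measurable_fst).sub measurable_snd).pow_const 2).stronglyMeasurable).symm

theorem pP_empiricalMeasure {S : Set 𝒳} (hS : MeasurableSet S) :
    pP (empiricalMeasure X Y n ω) S = phat X n S ω := by
  have hSu : MeasurableSet (S ×ˢ (Set.univ : Set ℝ)) := hS.prod MeasurableSet.univ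
  rw [pP, ← measureReal_def, ← integral_indicator_one hSu,
    integral_empiricalMeasure (f := (S ×ˢ Set.univ).indicator 1)
      (stronglyMeasurable_one.indicator hSu), phat, cnt]
  congr 1
  refine Finset.sum_congr rfl fun i _ => ?_
  by_cases h : X i ω ∈ S <;> simp [h]

theorem setIntegral_snd_empiricalMeasure {S : Set 𝒳} (hS : MeasurableSet S) :
    ∫ z in S ×ˢ Set.univ, z.2 ∂(empiricalMeasure X Y n ω) =
      (∑ i ∈ Finset.range n, S.indicator (fun _ => Y i ω) (X i ω)) / n := by
  have hSu : MeasurableSet (S ×ˢ (Set.univ : Set ℝ)) := hS.prod MeasurableSet.univ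
  rw [← integral_indicator hSu,
    integral_empiricalMeasure (measurable_snd.stronglyMeasurable.indicator hSu)]
  congr 1
  refine Finset.sum_congr rfl fun i _ => ?_
  by_cases h : X i ω ∈ S <;> simp [h]

theorem betaP_empiricalMeasure (hn : n ≠ 0) {S : Set 𝒳} (hS : MeasurableSet S) :
    betaP (empiricalMeasure X Y n ω) S = betahat X Y n S ω := by
  rw [betaP, setIntegral_snd_empiricalMeasure hS, pP_empiricalMeasure hS, phat,
    div_div_div_cancel_right₀ (Nat.cast_ne_zero.2 hn), betahat]

theorem shat_eq_sm_empiricalMeasure (m : HistModel 𝒳) (hn : n ≠ 0) :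
    shat m X Y n ω = sm m (empiricalMeasure X Y n ω) := by
  funext x
  exact Finset.sum_congr rfl fun l _ => by rw [betaP_empiricalMeasure hn (m.meas l)]

end Empirical

theorem ideal_penalty_decomposition_general
    (Ω 𝒳 : Type) [MeasurableSpace Ω] [MeasurableSpace 𝒳]
    (P : Measure (𝒳 × ℝ)) (hP : IsProbabilityMeasure P)
    (X : ℕ → Ω → 𝒳) (Y : ℕ → Ω → ℝ) (n : ℕ) (hn : 0 < n)
    (hY2 : Integrable (fun z : 𝒳 × ℝ => z.2 ^ 2) P)
    (m : HistModel 𝒳) (hp : ∀ l, 0 < pP P (m.cell l)) :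
    ∀ ω : Ω, (∀ l, 0 < cnt X n (m.cell l) ω) →
      risk P (shat m X Y n ω) - empRisk X Y n (shat m X Y n ω) ω =
        (∑ l, (pP P (m.cell l) + phat X n (m.cell l) ω) *
            (betahat X Y n (m.cell l) ω - betaP P (m.cell l)) ^ 2) +
          (risk P (sm m P) - empRisk X Y n (sm m P) ω) := by
  intro ω hcnt
  set Pn := empiricalMeasure X Y n ω
  have hphat : ∀ l, phat X n (m.cell l) ω = pP Pn (m.cell l) :=
    fun l => (pP_empiricalMeasure (m.meas l)).symm
  have hβ : ∀ l, betahat X Y n (m.cell l) ω = betaP Pn (m.cell l) :=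
    fun l => (betaP_empiricalMeasure hn.ne' (m.meas l)).symm
  have hpPn : ∀ l, pP Pn (m.cell l) ≠ 0 := fun l => by
    rw [← hphat l]; exact (div_pos (hcnt l) (Nat.cast_pos.2 hn)).ne'
  have hY2n : Integrable (fun z : 𝒳 × ℝ => z.2 ^ 2) Pn :=
    integrable_empiricalMeasure (measurable_snd.pow_const 2).stronglyMeasurable
  rw [empRisk_eq_risk_empiricalMeasure (t := shat m X Y n ω) (measurable_histogram _),
    empRisk_eq_risk_empiricalMeasure (t := sm m P) (measurable_histogram _),
    shat_eq_sm_empiricalMeasure m hn.ne']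
  simp only [hphat, hβ]
  exact risk_sm_sub_risk_sm P Pn hY2 hY2n (fun l => (hp l).ne') hpPn

/-- **Exact decomposition of the ideal penalty for histograms.** On the event
`min_λ p̂_λ > 0`, `penid(m) = (P − P_n)γ(ŝ_m)
= Σ_λ (p_λ + p̂_λ)(β̂_λ − β_λ)² + (P − P_n)γ(s_m)`. -/
theorem ideal_penalty_decomposition
    (Ω 𝒳 : Type) [MeasurableSpace Ω] [MeasurableSpace 𝒳]
    (P : Measure (𝒳 × ℝ)) (hP : IsProbabilityMeasure P)
    (X : ℕ → Ω → 𝒳) (Y : ℕ → Ω → ℝ) (n : ℕ) (hn : 0 < n)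
    (hXm : ∀ i, Measurable (X i)) (hYm : ∀ i, Measurable (Y i))
    (hY2 : Integrable (fun z : 𝒳 × ℝ => z.2 ^ 2) P)
    (m : HistModel 𝒳) (hp : ∀ l, 0 < pP P (m.cell l)) :
    ∀ ω : Ω, (∀ l, 0 < cnt X n (m.cell l) ω) →
      risk P (shat m X Y n ω) - empRisk X Y n (shat m X Y n ω) ω =
        (∑ l, (pP P (m.cell l) + phat X n (m.cell l) ω) *
            (betahat X Y n (m.cell l) ω - betaP P (m.cell l)) ^ 2) +
          (risk P (sm m P) - empRisk X Y n (sm m P) ω) :=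
  ideal_penalty_decomposition_general Ω 𝒳 P hP X Y n hn hY2 m hp

end RP
end

section
/- (Hölder bias, lower bound.) Let 𝒳 = [0,1], let X have a law with P(X∈I) ≥ c_min^X·Leb(I) for all intervals I ⊆ 𝒳 (density bounded from below by c_min^X > 0), and let s ∈ H(α,R) (α ∈ (0,1], R > 0) be non-constant. For D ≥ 1 let s_{m(D)} be the histogram projection of s on the regular partition of [0,1] into D intervals. Then there exists a constant c_s > 0 (depending on s, α and c_min^X but not on D) such that for all D ≥ 1, ℓ(s, s_{m(D)}) = E[(s(X) − s_{m(D)}(X))²] ≥ c_s · D^{−(1+1/α)}. In other words, non-constant α-Hölder functions satisfy assumption (Ap) with β₁ = 1 + α^{−1} and β₂ = 2α. -/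
/-!
Choose `x₀ ≤ y₀` in `[0,1]` with `s x₀ ≠ s y₀` and join them by the grid points `j / D` clamped
to `[x₀, y₀]`: consecutive clamped points lie in a common cell, so `δ = |s y₀ - s x₀|` is at most
the sum of `D` increments `ω_k` of `s` inside single cells. In a cell of length `1 / D`, whatever
the value `β` of the histogram there, one of the two points is `ω_k / 2` away from `β`; by Hölder
continuity `s` stays `ω_k / 4` away from `β` on an interval of length `r_k = (ω_k / 4R) ^ (1/α)`
around it, and `r_k ≤ 1 / D`, so that interval fits in the cell. The density lower bound turns
this into a contribution `≳ ω_k ^ (2 + 1/α)` to the squared error on the cell, and Hölder's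
inequality for sums gives `∑ ω_k ^ (2 + 1/α) ≥ D ^ (-(1 + 1/α)) δ ^ (2 + 1/α)`.
-/

open MeasureTheory Finset

/-- index of the cell of the regular partition of `[0,1]` into `D` intervals containing `x`. -/
noncomputable def regIdx (D : ℕ) (x : ℝ) : ℕ := min ⌊x * D⌋₊ (D - 1)

/-- the `k`-th cell of the regular partition of `[0,1]` into `D` intervals
(cells are extended so that they partition all of `ℝ`; only their trace on `[0,1]`
carries mass). -/
def regCell (D : ℕ) (k : ℕ) : Set ℝ := {x | regIdx D x = k}

/-- the histogram projection `s_m = Σ_λ E[s(X) | X ∈ I_λ] 1_{I_λ}` of `s` on the regular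
partition of `[0,1]` into `D` intervals, with respect to the law `ν` of `X`. -/
noncomputable def smProj (D : ℕ) (ν : Measure ℝ) (s : ℝ → ℝ) (x : ℝ) : ℝ :=
  (∫ t in regCell D (regIdx D x), s t ∂ν) / (ν (regCell D (regIdx D x))).toReal

open Set

def IsHolderOn (R α : ℝ) (s : ℝ → ℝ) (A : Set ℝ) : Prop :=
  ∀ x₁ ∈ A, ∀ x₂ ∈ A, |s x₁ - s x₂| ≤ R * |x₁ - x₂| ^ α

def HasDensityLowerBound (ν : Measure ℝ) (c : ℝ) : Prop :=
  ∀ I : Set ℝ, I ⊆ Icc 0 1 → I.OrdConnected → MeasurableSet I → c * (volume I).toReal ≤ (ν I).toReal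

lemma measurable_regIdx (D : ℕ) : Measurable (regIdx D) :=
  (Nat.measurable_floor.comp (measurable_id.mul_const _)).min measurable_const

lemma measurableSet_regCell (D k : ℕ) : MeasurableSet (regCell D k) :=
  measurable_regIdx D (measurableSet_singleton k)

lemma regIdx_lt {D : ℕ} (hD : 1 ≤ D) (x : ℝ) : regIdx D x < D :=
  (min_le_right _ _).trans_lt (Nat.sub_lt hD one_pos)

lemma Ico_subset_regCell {D k : ℕ} (hk : k < D) :
    Ico ((k : ℝ) / D) ((k + 1) / D) ⊆ regCell D k := by
  intro x ⟨hkx, hxk⟩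
  have hD : (0 : ℝ) < D := by exact_mod_cast (Nat.zero_le k).trans_lt hk
  rw [div_le_iff₀ hD] at hkx
  rw [lt_div_iff₀ hD] at hxk
  have hfloor : ⌊x * D⌋₊ = k := (Nat.floor_eq_iff ((Nat.cast_nonneg k).trans hkx)).2 ⟨hkx, hxk⟩
  show min ⌊x * D⌋₊ (D - 1) = k
  omega

lemma integral_eq_sum_setIntegral_regCell {ν : Measure ℝ} {D : ℕ} (hD : 1 ≤ D) {g : ℝ → ℝ}
    (hg : ∀ k < D, IntegrableOn g (regCell D k) ν) :
    ∫ x, g x ∂ν = ∑ k ∈ range D, ∫ x in regCell D k, g x ∂ν := by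
  have hcover : (⋃ k ∈ range D, regCell D k) = univ :=
    eq_univ_of_forall fun x => mem_biUnion (mem_range.2 (regIdx_lt hD x)) rfl
  have hdisj : (Finset.range D : Set ℕ).PairwiseDisjoint (regCell D) := fun i _ j _ hij =>
    Set.disjoint_left.2 fun x hi hj => hij (hi.symm.trans hj)
  rw [← setIntegral_univ, ← hcover, integral_biUnion_finset _
    (fun k _ => measurableSet_regCell D k) hdisj fun k hk => hg k (mem_range.1 hk)]

lemma Ico_min_subset_Ico_inter_Icc {a b w r : ℝ} (hw : w ∈ Icc a b) (hr : r ≤ b - a) :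
    Ico (min w (b - r)) (min w (b - r) + r) ⊆ Ico a b ∩ Icc (w - r) (w + r) := by
  intro t ⟨h₁, h₂⟩
  obtain ⟨ha, hb⟩ := hw
  rcases min_cases w (b - r) with ⟨hc, _⟩ | ⟨hc, _⟩ <;> rw [hc] at h₁ h₂ <;>
    exact ⟨⟨by linarith, by linarith⟩, by linarith, by linarith⟩

lemma max_min_mem_Icc_of_ne {x₀ y₀ a b : ℝ} (hxy : x₀ ≤ y₀) (hab : a ≤ b)
    (hne : max x₀ (min y₀ a) ≠ max x₀ (min y₀ b)) :
    max x₀ (min y₀ a) ∈ Icc a b ∧ max x₀ (min y₀ b) ∈ Icc a b := by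
  simp only [Set.mem_Icc, max_def, min_def] at hne ⊢
  split_ifs at hne ⊢ <;> grind

lemma exists_cellwise_chain (f : ℝ → ℝ) {x₀ y₀ : ℝ} (hx₀ : 0 ≤ x₀) (hxy : x₀ ≤ y₀) (hy₀ : y₀ ≤ 1)
    {D : ℕ} (hD : 1 ≤ D) :
    ∃ u v : ℕ → ℝ,
      (∀ k : ℕ, u k ∈ Icc (k / D : ℝ) ((k + 1) / D) ∧ v k ∈ Icc (k / D : ℝ) ((k + 1) / D)) ∧
      |f y₀ - f x₀| ≤ ∑ k ∈ range D, |f (v k) - f (u k)| := by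
  set e : ℕ → ℝ := fun j => max x₀ (min y₀ (j / D)) with he
  have hD0 : (0 : ℝ) < D := by exact_mod_cast hD
  have hcell : ∀ k : ℕ, (k / D : ℝ) ≤ (k + 1) / D := fun k => by gcongr; linarith
  -- where `e k = e (k + 1)` the pair contributes nothing, so any point of the cell will do
  refine ⟨fun k => if e k = e (k + 1) then k / D else e k,
    fun k => if e k = e (k + 1) then k / D else e (k + 1), fun k => ?_, ?_⟩
  · dsimp only
    split_ifs with h
    · exact ⟨left_mem_Icc.2 (hcell k), left_mem_Icc.2 (hcell k)⟩
    · simp only [he, Nat.cast_add, Nat.cast_one] at h ⊢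
      exact max_min_mem_Icc_of_ne hxy (hcell k) h
  · have he0 : e 0 = x₀ := by simp [he, hx₀]
    have heD : e D = y₀ := by simp [he, div_self hD0.ne', hxy, hy₀]
    calc |f y₀ - f x₀| = |∑ k ∈ range D, (f (e (k + 1)) - f (e k))| := by
          rw [sum_range_sub (fun j => f (e j)), he0, heD]
      _ ≤ ∑ k ∈ range D, |f (e (k + 1)) - f (e k)| := abs_sum_le_sum_abs _ _
      _ = ∑ k ∈ range D, |f _ - f _| := sum_congr rfl fun k _ => by split_ifs with h <;> simp [h]

section Holder

variable {ν : Measure ℝ} {s : ℝ → ℝ} {α R cminX : ℝ}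

lemma integrable_sq_sub_const [IsFiniteMeasure ν] (hsupp : ν (Icc 0 1)ᶜ = 0)
    (hs : Measurable s) (hα : 0 < α) (hR : 0 ≤ R) (hHol : IsHolderOn R α s (Icc 0 1))
    (β : ℝ) : Integrable (fun x => (s x - β) ^ 2) ν := by
  refine Integrable.of_bound ((hs.sub_const β).pow_const 2).aestronglyMeasurable
    ((|s 0| + R + |β|) ^ 2) ?_
  filter_upwards [measure_eq_zero_iff_ae_notMem.1 hsupp] with x hx
  rw [notMem_compl_iff] at hx
  have hsx : |s x - s 0| ≤ R :=
    calc |s x - s 0| ≤ R * |x - 0| ^ α := hHol x hx 0 (left_mem_Icc.2 zero_le_one)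
      _ ≤ R * 1 := by
        gcongr
        rw [sub_zero, abs_of_nonneg hx.1]
        exact Real.rpow_le_one hx.1 hx.2 hα.le
      _ = R := mul_one R
  rw [Real.norm_eq_abs, abs_pow, sq_le_sq₀ (abs_nonneg _) (by positivity), abs_le]
  have := abs_le.1 hsx
  constructor <;> linarith [le_abs_self (s 0), neg_abs_le (s 0), le_abs_self β, neg_abs_le β]

lemma mul_mul_le_setIntegral_of_le [IsFiniteMeasure ν] (hdens : HasDensityLowerBound ν cminX)
    {S I : Set ℝ} (hIS : I ⊆ S) (hI01 : I ⊆ Icc 0 1) (hIconn : I.OrdConnected)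
    (hI : MeasurableSet I) {g : ℝ → ℝ} (hg0 : ∀ t, 0 ≤ g t) (hg : IntegrableOn g S ν)
    {m : ℝ} (hm0 : 0 ≤ m) (hm : ∀ t ∈ I, m ≤ g t) :
    m * (cminX * (volume I).toReal) ≤ ∫ t in S, g t ∂ν :=
  calc m * (cminX * (volume I).toReal) ≤ m * (ν I).toReal :=
        mul_le_mul_of_nonneg_left (hdens I hI01 hIconn hI) hm0
    _ ≤ ∫ t in I, g t ∂ν :=
        setIntegral_ge_of_const_le_real hI (measure_ne_top ν I) hm (hg.mono_set hIS)
    _ ≤ ∫ t in S, g t ∂ν :=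
        setIntegral_mono_set hg (Filter.Eventually.of_forall hg0) hIS.eventuallyLE

lemma mul_abs_sub_rpow_le_setIntegral_sq_sub [IsFiniteMeasure ν] (hα : 0 < α) (hR : 0 < R)
    (hdens : HasDensityLowerBound ν cminX)
    (hHol : IsHolderOn R α s (Icc 0 1))
    {a b : ℝ} (hab : Icc a b ⊆ Icc 0 1) {S : Set ℝ} (hS : Ico a b ⊆ S) {β : ℝ}
    (hint : IntegrableOn (fun t => (s t - β) ^ 2) S ν) {u v : ℝ} (hu : u ∈ Icc a b)
    (hv : v ∈ Icc a b) :
    cminX / (16 * (4 * R) ^ (1 / α)) * |s u - s v| ^ (2 + 1 / α) ≤ ∫ t in S, (s t - β) ^ 2 ∂ν := by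
  set ω := |s u - s v|
  obtain ⟨w, hw, hwβ⟩ : ∃ w ∈ Icc a b, ω / 2 ≤ |s w - β| := by
    by_cases h : ω / 2 ≤ |s u - β|
    · exact ⟨u, hu, h⟩
    · refine ⟨v, hv, ?_⟩
      have := abs_sub_le (s u) β (s v)
      rw [abs_sub_comm β] at this
      linarith
  set r := (ω / (4 * R)) ^ (1 / α) with hr
  have hr0 : 0 ≤ r := by positivity
  have hrα : R * r ^ α = ω / 4 := by
    rw [hr, ← Real.rpow_mul (by positivity), one_div_mul_cancel hα.ne', Real.rpow_one]
    field_simp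
  have hrlen : r ≤ b - a := by
    have hωle : ω ≤ R * (b - a) ^ α := by
      calc ω ≤ R * |u - v| ^ α := hHol u (hab hu) v (hab hv)
        _ ≤ R * (b - a) ^ α := by
          gcongr
          rw [abs_le]; constructor <;> linarith [hu.1, hu.2, hv.1, hv.2]
    calc r ≤ ((b - a) ^ α) ^ (1 / α) := by
          refine Real.rpow_le_rpow (by positivity) ?_ (by positivity)
          rw [div_le_iff₀ (by positivity)]
          nlinarith [Real.rpow_nonneg (sub_nonneg.2 (hu.1.trans hu.2)) α]
      _ = b - a := by
          rw [← Real.rpow_mul (sub_nonneg.2 (hu.1.trans hu.2)), mul_one_div_cancel hα.ne',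
            Real.rpow_one]
  set c := min w (b - r)
  have hI := Ico_min_subset_Ico_inter_Icc hw hrlen
  have hfar : ∀ t ∈ Ico c (c + r), (ω / 4) ^ 2 ≤ (s t - β) ^ 2 := by
    intro t ht
    have hnear : |t - w| ≤ r :=
      abs_sub_le_iff.2 ⟨by linarith [(hI ht).2.2], by linarith [(hI ht).2.1]⟩
    have ht01 : t ∈ Icc (0 : ℝ) 1 := hab (Ico_subset_Icc_self (hI ht).1)
    have hst : |s t - s w| ≤ ω / 4 :=
      calc |s t - s w| ≤ R * |t - w| ^ α := hHol t ht01 w (hab hw)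
        _ ≤ R * r ^ α := by gcongr
        _ = ω / 4 := hrα
    rw [← sq_abs (s t - β)]
    have := abs_sub_le (s w) (s t) β
    rw [abs_sub_comm (s w) (s t)] at this
    gcongr
    linarith
  calc cminX / (16 * (4 * R) ^ (1 / α)) * ω ^ (2 + 1 / α)
      = (ω / 4) ^ 2 * (cminX * (volume (Ico c (c + r))).toReal) := by
        rw [Real.volume_Ico, add_sub_cancel_left, ENNReal.toReal_ofReal hr0, hr,
          Real.rpow_add' (abs_nonneg _) (by positivity),
          Real.div_rpow (abs_nonneg _) (by positivity)]
        norm_cast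
        field_simp
        ring
    _ ≤ ∫ t in S, (s t - β) ^ 2 ∂ν :=
        mul_mul_le_setIntegral_of_le hdens (fun t ht => hS (hI ht).1)
          (fun t ht => hab (Ico_subset_Icc_self (hI ht).1)) ordConnected_Ico measurableSet_Ico
          (fun t => sq_nonneg _) hint (by positivity) hfar

lemma mul_sum_rpow_le_integral_sq_sub_smProj [IsFiniteMeasure ν] (hsupp : ν (Icc 0 1)ᶜ = 0)
    (hs : Measurable s) (hα : 0 < α) (hR : 0 < R)
    (hdens : HasDensityLowerBound ν cminX)
    (hHol : IsHolderOn R α s (Icc 0 1))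
    {D : ℕ} (hD : 1 ≤ D) {u v : ℕ → ℝ}
    (huv : ∀ k : ℕ, u k ∈ Icc (k / D : ℝ) ((k + 1) / D) ∧ v k ∈ Icc (k / D : ℝ) ((k + 1) / D)) :
    cminX / (16 * (4 * R) ^ (1 / α)) * ∑ k ∈ range D, |s (v k) - s (u k)| ^ (2 + 1 / α) ≤
      ∫ x, (s x - smProj D ν s x) ^ 2 ∂ν := by
  set m : ℕ → ℝ := fun k => (∫ t in regCell D k, s t ∂ν) / (ν (regCell D k)).toReal
  have hproj : ∀ k, ∀ x ∈ regCell D k, (s x - smProj D ν s x) ^ 2 = (s x - m k) ^ 2 :=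
    fun k x hx => by rw [smProj, show regIdx D x = k from hx]
  have hint : ∀ k, IntegrableOn (fun x => (s x - m k) ^ 2) (regCell D k) ν := fun k =>
    (integrable_sq_sub_const hsupp hs hα hR.le hHol (m k)).integrableOn
  rw [integral_eq_sum_setIntegral_regCell hD fun k _ =>
    (hint k).congr_fun (fun x hx => (hproj k x hx).symm) (measurableSet_regCell D k), mul_sum]
  refine sum_le_sum fun k hk => ?_
  replace hk := Finset.mem_range.1 hk
  have hD0 : (0 : ℝ) < D := by exact_mod_cast hD
  have hk1 : (k + 1 : ℝ) ≤ D := by exact_mod_cast hk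
  rw [setIntegral_congr_fun (measurableSet_regCell D k) (hproj k)]
  exact mul_abs_sub_rpow_le_setIntegral_sq_sub hα hR hdens hHol
    (Icc_subset_Icc (by positivity) ((div_le_one hD0).2 hk1))
    (Ico_subset_regCell hk) (hint k) (huv k).2 (huv k).1

end Holder

theorem holder_bias_lower_general (α R cminX : ℝ) (hα0 : 0 < α) (hR : 0 < R)
    (hc : 0 < cminX)
    (ν : Measure ℝ) (hν : IsProbabilityMeasure ν) (hsupp : ν (Set.Icc (0:ℝ) 1)ᶜ = 0)
    (hdens : ∀ I : Set ℝ, I ⊆ Set.Icc (0:ℝ) 1 → I.OrdConnected → MeasurableSet I →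
      cminX * (volume I).toReal ≤ (ν I).toReal)
    (s : ℝ → ℝ) (hs : Measurable s)
    (hHol : ∀ x₁ ∈ Set.Icc (0:ℝ) 1, ∀ x₂ ∈ Set.Icc (0:ℝ) 1,
      |s x₁ - s x₂| ≤ R * |x₁ - x₂| ^ α)
    (hnc : ∃ x ∈ Set.Icc (0:ℝ) 1, ∃ y ∈ Set.Icc (0:ℝ) 1, s x ≠ s y) :
    ∃ cs : ℝ, 0 < cs ∧ ∀ D : ℕ, 1 ≤ D →
      cs * (D : ℝ) ^ (-(1 + 1 / α)) ≤ ∫ x, (s x - smProj D ν s x) ^ 2 ∂ν := by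
  obtain ⟨x₀, hx₀, y₀, hy₀, hxy, hne⟩ :
      ∃ x₀ ∈ Icc (0 : ℝ) 1, ∃ y₀ ∈ Icc (0 : ℝ) 1, x₀ ≤ y₀ ∧ s y₀ ≠ s x₀ := by
    obtain ⟨x, hx, y, hy, h⟩ := hnc
    rcases le_total x y with hxy | hyx
    exacts [⟨x, hx, y, hy, hxy, h.symm⟩, ⟨y, hy, x, hx, hyx, h⟩]
  set c := cminX / (16 * (4 * R) ^ (1 / α))
  set p := 2 + 1 / α
  have hδ : 0 < |s y₀ - s x₀| := abs_pos.2 (sub_ne_zero.2 hne)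
  refine ⟨c * |s y₀ - s x₀| ^ p, by positivity, fun D hD => ?_⟩
  obtain ⟨u, v, huv, hchain⟩ := exists_cellwise_chain s hx₀.1 hxy hy₀.2 hD
  have hD0 : (0 : ℝ) < D := by exact_mod_cast hD
  have hpower : |s y₀ - s x₀| ^ p ≤ (D : ℝ) ^ (p - 1) * ∑ k ∈ range D, |s (v k) - s (u k)| ^ p :=
    calc |s y₀ - s x₀| ^ p ≤ (∑ k ∈ range D, |s (v k) - s (u k)|) ^ p := by gcongr
      _ ≤ _ := by
        simpa using Real.rpow_sum_le_const_mul_sum_rpow (range D) (fun k => s (v k) - s (u k))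
          (by linarith [one_div_pos.2 hα0] : (1 : ℝ) ≤ p)
  have hDpow : (D : ℝ) ^ (-(1 + 1 / α)) * (D : ℝ) ^ (p - 1) = 1 := by
    rw [← Real.rpow_add hD0, show -(1 + 1 / α) + (p - 1) = 0 by ring, Real.rpow_zero]
  calc c * |s y₀ - s x₀| ^ p * (D : ℝ) ^ (-(1 + 1 / α))
      = c * (D : ℝ) ^ (-(1 + 1 / α)) * |s y₀ - s x₀| ^ p := by ring
    _ ≤ c * (D : ℝ) ^ (-(1 + 1 / α)) *
          ((D : ℝ) ^ (p - 1) * ∑ k ∈ range D, |s (v k) - s (u k)| ^ p) := by gcongr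
    _ = c * ∑ k ∈ range D, |s (v k) - s (u k)| ^ p := by
        rw [← mul_assoc, mul_assoc c, hDpow, mul_one]
    _ ≤ ∫ x, (s x - smProj D ν s x) ^ 2 ∂ν :=
        mul_sum_rpow_le_integral_sq_sub_smProj hsupp hs hα0 hR hdens hHol hD huv

/-- **Hölder bias, lower bound.** If the law `ν` of `X` on `[0,1]` has density bounded from
below (`ν(I) ≥ c_min^X Leb(I)` for all intervals `I ⊆ [0,1]`), and `s ∈ H(α,R)` with
`α ∈ (0,1]` is non-constant on `[0,1]`, then there is `c_s > 0` (not depending on `D`) with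
`ℓ(s, s_{m(D)}) = E[(s(X) − s_{m(D)}(X))²] ≥ c_s D^{−(1+1/α)}` for all `D ≥ 1`: non-constant
`α`-Hölder functions satisfy (Ap) with `β₁ = 1 + 1/α` and `β₂ = 2α`. -/
theorem holder_bias_lower (α R cminX : ℝ) (hα0 : 0 < α) (hα1 : α ≤ 1) (hR : 0 < R)
    (hc : 0 < cminX)
    (ν : Measure ℝ) (hν : IsProbabilityMeasure ν) (hsupp : ν (Set.Icc (0:ℝ) 1)ᶜ = 0)
    (hdens : ∀ I : Set ℝ, I ⊆ Set.Icc (0:ℝ) 1 → I.OrdConnected → MeasurableSet I →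
      cminX * (volume I).toReal ≤ (ν I).toReal)
    (s : ℝ → ℝ) (hs : Measurable s)
    (hHol : ∀ x₁ ∈ Set.Icc (0:ℝ) 1, ∀ x₂ ∈ Set.Icc (0:ℝ) 1,
      |s x₁ - s x₂| ≤ R * |x₁ - x₂| ^ α)
    (hnc : ∃ x ∈ Set.Icc (0:ℝ) 1, ∃ y ∈ Set.Icc (0:ℝ) 1, s x ≠ s y) :
    ∃ cs : ℝ, 0 < cs ∧ ∀ D : ℕ, 1 ≤ D →
      cs * (D : ℝ) ^ (-(1 + 1 / α)) ≤ ∫ x, (s x - smProj D ν s x) ^ 2 ∂ν :=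
  holder_bias_lower_general α R cminX hα0 hR hc ν hν hsupp hdens s hs hHol hnc
end
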